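/- On the semidirect product H_0 ⋉_{R*, 0} H_0*, the antisymmetric bilinear form ω(x + a*, y + b*) = −⟨x, b*⟩ + ⟨a*, y⟩ is a Connes cocycle: ω(u ∗ v, w) + ω(v ∗ w, u) + ω(w ∗ u, v) = 0 for all u, v, w. -/
import Mathlib

open Finset

/-- The Heisenberg product on `H₀`: `e₁ · e₃ = e₂`, other basis products zero. -/
def mulH0 (x y : Fin 3 → ℂ) : Fin 3 → ℂ :=
  fun k => if k = 1 then x 0 * y 2 else 0

/-- Structure constants of `H₀`. -/
def cH0 (i j k : Fin 3) : ℂ := if i = 0 ∧ j = 2 ∧ k = 1 then 1 else 0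

/-- The dual of right multiplication on `H₀*`: `⟨R*(x)u*, eⱼ⟩ = ⟨u*, eⱼ · x⟩`. -/
noncomputable def Rstar0 (x u : Fin 3 → ℂ) : Fin 3 → ℂ :=
  fun j => ∑ i, ∑ k, x i * cH0 j i k * u k

/-- The semidirect product `H₀ ⋉_{R*,0} H₀*`:
`(x + a*) ∗ (y + b*) = x·y + R*(x)b*`. -/
noncomputable def mulSemi (p q : (Fin 3 → ℂ) × (Fin 3 → ℂ)) :
    (Fin 3 → ℂ) × (Fin 3 → ℂ) :=
  (mulH0 p.1 q.1, Rstar0 p.1 q.2)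

/-- The natural antisymmetric bilinear form
`ω(x + a*, y + b*) = −⟨x, b*⟩ + ⟨a*, y⟩`. -/
noncomputable def omegaSemi (p q : (Fin 3 → ℂ) × (Fin 3 → ℂ)) : ℂ :=
  -(∑ k, p.1 k * q.2 k) + ∑ k, p.2 k * q.1 k

/-- On `H₀ ⋉_{R*,0} H₀*`, the form `ω` is antisymmetric and is a Connes
cocycle: `ω(u∗v, w) + ω(v∗w, u) + ω(w∗u, v) = 0`. -/
theorem omegaSemi_Connes_cocycle :
    (∀ p q, omegaSemi p q = - omegaSemi q p) ∧
    (∀ u v w,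
      omegaSemi (mulSemi u v) w + omegaSemi (mulSemi v w) u
        + omegaSemi (mulSemi w u) v = 0) := by
  constructor
  · intro p q
    simp only [omegaSemi, Fin.sum_univ_three]
    ring
  · intro u v w
    simp only [omegaSemi, mulSemi, mulH0, Rstar0, cH0, Fin.sum_univ_three]
    norm_num [Fin.ext_iff]
    ring
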